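/- Let A, B, C, A', B', C' be compact convex sets in ℝ² with A ∩ B ∩ C = ∅ and A' ∩ B' ∩ C' = ∅. Then there exist two distinct sets X, Y from {A,B,C} and one set Z from {A',B',C'} with X ∩ Y ∩ Z = ∅. -/

import Mathlib

/-!
Let `G` and `F` be the two families. Suppose every mixed triple `G j ∩ G k ∩ F i` is nonempty, take
the lexicographic minimum of each (it exists by compactness), and let `y` be the largest of these
minima, attained at `(j, k, i)`. By Helly's theorem in the plane, applied to the three sets and the
convex lexicographic half-plane below `y`, the point `y` is already the lexicographic minimum of
one of the pairwise intersections `G j ∩ G k`, `G k ∩ F i` or `G j ∩ F i`. If it is `G j ∩ G k`,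
then every minimum of `G j ∩ G k ∩ F i'` is both `≥ y` and `≤ y`, so `y` lies in every `F i'`; in
the other two cases `y` lies in every `G j'` in the same way. Either way a monochromatic
intersection is nonempty.
-/

open Set Module

instance Prod.Lex.posSMulStrictMono {𝕜 α β : Type*} [Zero 𝕜] [Preorder 𝕜] [SMul 𝕜 α] [SMul 𝕜 β]
    [Preorder α] [Preorder β] [PosSMulStrictMono 𝕜 α] [PosSMulStrictMono 𝕜 β] :
    PosSMulStrictMono 𝕜 (Lex (α × β)) where
  smul_lt_smul_of_pos_left a ha x y hxy := by
    rcases Prod.Lex.lt_iff.1 hxy with h | ⟨h₁, h₂⟩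
    · exact Prod.Lex.lt_iff.2 (Or.inl (smul_lt_smul_of_pos_left h ha))
    · exact Prod.Lex.lt_iff.2 (Or.inr ⟨congrArg (a • ·) h₁, smul_lt_smul_of_pos_left h₂ ha⟩)

theorem IsCompact.exists_isMinOn_toLex {α β : Type*} [LinearOrder α] [TopologicalSpace α]
    [OrderClosedTopology α] [LinearOrder β] [TopologicalSpace β] [OrderClosedTopology β]
    {S : Set (α × β)} (hS : IsCompact S) (hne : S.Nonempty) : ∃ p ∈ S, IsMinOn toLex S p := by
  obtain ⟨p, hpS, hp⟩ := hS.exists_isMinOn hne continuous_fst.continuousOn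
  have hfiber : IsCompact (S ∩ Prod.fst ⁻¹' {p.1}) :=
    hS.inter_right (isClosed_singleton.preimage continuous_fst)
  obtain ⟨q, ⟨hqS, hq₁⟩, hq⟩ := hfiber.exists_isMinOn ⟨p, hpS, rfl⟩ continuous_snd.continuousOn
  refine ⟨q, hqS, fun r hr => Prod.Lex.le_iff.2 ?_⟩
  rcases (hq₁.trans_le (hp hr)).lt_or_eq with h | h
  · exact Or.inl h
  · exact Or.inr ⟨h, hq ⟨hr, h.symm.trans hq₁⟩⟩

theorem Convex.iInter_nonempty_of_forall_ne {ι 𝕜 E : Type*} [Fintype ι] [Field 𝕜] [LinearOrder 𝕜]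
    [IsStrictOrderedRing 𝕜] [AddCommGroup E] [Module 𝕜 E] [FiniteDimensional 𝕜 E]
    {F : ι → Set E} (h_card : finrank 𝕜 E + 1 < Fintype.card ι) (h_convex : ∀ i, Convex 𝕜 (F i))
    (h_inter : ∀ j, ∃ x, ∀ i ≠ j, x ∈ F i) : (⋂ i, F i).Nonempty := by
  have := Convex.helly_theorem' (s := Finset.univ) (fun i _ => h_convex i) fun I _ hI => by
    obtain ⟨j, -, hj⟩ := Finset.exists_mem_notMem_of_card_lt_card (s := I) (t := Finset.univ)
      (hI.trans_lt h_card)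
    obtain ⟨x, hx⟩ := h_inter j
    exact ⟨x, mem_iInter₂.2 fun i hi => hx i (ne_of_mem_of_not_mem hi hj)⟩
  simpa using this

theorem isMinOn_toLex_inter_pair {K₁ K₂ K₃ : Set (ℝ × ℝ)} (h₁ : Convex ℝ K₁) (h₂ : Convex ℝ K₂)
    (h₃ : Convex ℝ K₃) {y : ℝ × ℝ} (hy : y ∈ K₁ ∩ K₂ ∩ K₃)
    (hmin : IsMinOn toLex (K₁ ∩ K₂ ∩ K₃) y) :
    IsMinOn toLex (K₁ ∩ K₂) y ∨ IsMinOn toLex (K₂ ∩ K₃) y ∨ IsMinOn toLex (K₁ ∩ K₃) y := by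
  simp only [isMinOn_iff]
  by_contra! ⟨⟨p₃, ⟨hp₃₁, hp₃₂⟩, hp₃y⟩, ⟨p₁, ⟨hp₁₂, hp₁₃⟩, hp₁y⟩, ⟨p₂, ⟨hp₂₁, hp₂₃⟩, hp₂y⟩⟩
  obtain ⟨⟨hy₁, hy₂⟩, hy₃⟩ := hy
  have hbelow : Convex ℝ (toLex ⁻¹' Iio (toLex y) : Set (ℝ × ℝ)) :=
    (convex_Iio _).linear_preimage (toLexLinearEquiv ℝ (ℝ × ℝ)).toLinearMap
  obtain ⟨z, hz⟩ := Convex.iInter_nonempty_of_forall_ne (𝕜 := ℝ)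
    (F := ![K₁, K₂, K₃, toLex ⁻¹' Iio (toLex y)])
    (by simp) (by simp [Fin.forall_fin_succ, h₁, h₂, h₃, hbelow]) fun j => by
      fin_cases j
      · exact ⟨p₁, by simp [Fin.forall_fin_succ, *]⟩
      · exact ⟨p₂, by simp [Fin.forall_fin_succ, *]⟩
      · exact ⟨p₃, by simp [Fin.forall_fin_succ, *]⟩
      · exact ⟨y, by simp [Fin.forall_fin_succ, *]⟩
  obtain ⟨hz₁, hz₂, hz₃, hzy⟩ : z ∈ K₁ ∧ z ∈ K₂ ∧ z ∈ K₃ ∧ toLex z < toLex y := by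
    simpa [Fin.forall_fin_succ] using hz
  exact (hmin ⟨⟨hz₁, hz₂⟩, hz₃⟩).not_gt hzy

theorem exists_inter_inter_eq_empty {ι κ : Type*} [Finite ι] [Finite κ]
    {G : ι → Set (ℝ × ℝ)} {F : κ → Set (ℝ × ℝ)}
    (hGcp : ∀ j, IsCompact (G j)) (hFcp : ∀ i, IsCompact (F i))
    (hGcv : ∀ j, Convex ℝ (G j)) (hFcv : ∀ i, Convex ℝ (F i))
    (hG : ⋂ j, G j = ∅) (hF : ⋂ i, F i = ∅) :
    ∃ j k i, G j ∩ G k ∩ F i = ∅ := by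
  by_contra! hne
  have : Nonempty ι := not_isEmpty_iff.1 fun _ => by simp at hG
  have : Nonempty κ := not_isEmpty_iff.1 fun _ => by simp at hF
  choose y hy hmin using fun t : ι × ι × κ =>
    (((hGcp t.1).inter_right (hGcp t.2.1).isClosed).inter_right (hFcp t.2.2).isClosed
      ).exists_isMinOn_toLex (hne t.1 t.2.1 t.2.2)
  obtain ⟨⟨j, k, i⟩, hmax⟩ := Finite.exists_max (toLex ∘ y)
  have pinned : ∀ {S} t, IsMinOn toLex S (y (j, k, i)) → y t ∈ S → y t = y (j, k, i) :=
    fun t hS ht => toLex.injective (le_antisymm (hmax t) (hS ht))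
  rcases isMinOn_toLex_inter_pair (hGcv j) (hGcv k) (hFcv i) (hy (j, k, i)) (hmin (j, k, i))
    with h | h | h
  · exact hF.subset (mem_iInter.2 fun i' =>
      (pinned _ h (hy (j, k, i')).1 ▸ (hy (j, k, i')).2 : y (j, k, i) ∈ F i'))
  · exact hG.subset (mem_iInter.2 fun j' =>
      (pinned _ h ⟨(hy (j', k, i)).1.2, (hy (j', k, i)).2⟩ ▸ (hy (j', k, i)).1.1 :
        y (j, k, i) ∈ G j'))
  · exact hG.subset (mem_iInter.2 fun k' =>
      (pinned _ h ⟨(hy (j, k', i)).1.1, (hy (j, k', i)).2⟩ ▸ (hy (j, k', i)).1.2 :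
        y (j, k, i) ∈ G k'))

theorem iInter_matrix_three {α : Type*} (X Y Z : Set α) : ⋂ i, ![X, Y, Z] i = X ∩ Y ∩ Z := by
  ext
  simp [Fin.forall_fin_succ, and_assoc]

/-- Proposition (H1): if `A ∩ B ∩ C = ∅` and `A' ∩ B' ∩ C' = ∅` for compact
convex planar sets, then some mixed triple (two distinct sets among `{A,B,C}`
and one among `{A',B',C'}`) has empty intersection. -/
theorem blue_disjoint_edges (A B C A' B' C' : Set (ℝ × ℝ))
    (hAcp : IsCompact A) (hBcp : IsCompact B) (hCcp : IsCompact C)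
    (hA'cp : IsCompact A') (hB'cp : IsCompact B') (hC'cp : IsCompact C')
    (hAcv : Convex ℝ A) (hBcv : Convex ℝ B) (hCcv : Convex ℝ C)
    (hA'cv : Convex ℝ A') (hB'cv : Convex ℝ B') (hC'cv : Convex ℝ C')
    (h1 : A ∩ B ∩ C = ∅) (h2 : A' ∩ B' ∩ C' = ∅) :
    ∃ Z ∈ ({A', B', C'} : Set (Set (ℝ × ℝ))),
      A ∩ B ∩ Z = ∅ ∨ B ∩ C ∩ Z = ∅ ∨ C ∩ A ∩ Z = ∅ := by
  obtain ⟨j, k, i, h⟩ := exists_inter_inter_eq_empty (G := ![A, B, C]) (F := ![A', B', C'])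
    (by simp [Fin.forall_fin_succ, *]) (by simp [Fin.forall_fin_succ, *])
    (by simp [Fin.forall_fin_succ, *]) (by simp [Fin.forall_fin_succ, *])
    (by rwa [iInter_matrix_three]) (by rwa [iInter_matrix_three])
  refine ⟨![A', B', C'] i, by fin_cases i <;> simp, ?_⟩
  generalize ![A', B', C'] i = Z at h
  simp only [eq_empty_iff_forall_notMem, mem_inter_iff] at h ⊢
  fin_cases j <;> fin_cases k <;>
    simp only [Fin.zero_eta, Fin.mk_one, Fin.reduceFinMk, Matrix.cons_val] at h <;> grind
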